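/- arXiv:2502.01928 — 11 statements merged into one kernel-verified Lean document; each statement's English description precedes it below -/
import Mathlib

section
/- Let R be a Rota-Baxter operator of nonzero weight λ on a finite-dimensional algebra A over a field F. Then R is splitting (i.e., A decomposes as a direct sum of subalgebras A₁ ⊕ A₂ with R restricting to -λ·id on A₁ and to 0 on A₂) if and only if R² = -λR. -/
open Module End LinearMap

section LinearAlgebra

variable {F M : Type*} [Field F] [AddCommGroup M] [Module F M]

theorem apply_apply_eq_smul_of_codisjoint {R : M →ₗ[F] M} {c : F} {p q : Submodule F M}
    (hpq : Codisjoint p q) (hp : ∀ x ∈ p, R x = c • x) (hq : ∀ x ∈ q, R x = 0) (x : M) :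
    R (R x) = c • R x := by
  obtain ⟨a, ha, b, hb, rfl⟩ := Submodule.mem_sup.mp (hpq.eq_top ▸ Submodule.mem_top : x ∈ p ⊔ q)
  have hRa : R a ∈ p := hp a ha ▸ p.smul_mem c ha
  rw [map_add, hq b hb, add_zero, hp _ hRa]

/-- `c⁻¹ • R` is a projection onto the `c`-eigenspace of `R` along its kernel. -/
theorem isCompl_eigenspace_ker_of_apply_apply_eq_smul {R : M →ₗ[F] M} {c : F} (hc : c ≠ 0)
    (hR : ∀ x, R (R x) = c • R x) : IsCompl (eigenspace R c) (ker R) := by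
  have hidem : IsIdempotentElem (c⁻¹ • R) := by
    ext x
    simp only [Module.End.mul_apply, LinearMap.smul_apply, map_smul, hR, smul_smul,
      inv_mul_cancel₀ hc, one_smul]
  have hrange : range (c⁻¹ • R) = eigenspace R c := by
    ext x
    rw [hidem.mem_range_iff, mem_eigenspace_iff, LinearMap.smul_apply, inv_smul_eq_iff₀ hc]
  rw [← hrange, ← ker_smul R c⁻¹ (inv_ne_zero hc)]
  exact hidem.isCompl

end LinearAlgebra

def IsRotaBaxter {F A : Type*} [Field F] [NonUnitalNonAssocRing A] [Module F A]
    (lam : F) (R : A →ₗ[F] A) : Prop :=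
  ∀ x y : A, R x * R y = R (R x * y + x * R y + lam • (x * y))

namespace IsRotaBaxter

variable {F A : Type*} [Field F] [NonUnitalNonAssocRing A] [Module F A]
  {lam : F} {R : A →ₗ[F] A}

theorem mul_mem_ker (hR : IsRotaBaxter lam R) (hlam : lam ≠ 0) {x y : A}
    (hx : x ∈ ker R) (hy : y ∈ ker R) : x * y ∈ ker R := by
  have h := hR x y
  rw [mem_ker] at hx hy ⊢
  simpa [hx, hy, hlam] using h.symm

variable [SMulCommClass F A A] [IsScalarTower F A A]

theorem mul_mem_eigenspace_neg (hR : IsRotaBaxter lam R) (hlam : lam ≠ 0) {x y : A}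
    (hx : x ∈ eigenspace R (-lam)) (hy : y ∈ eigenspace R (-lam)) :
    x * y ∈ eigenspace R (-lam) := by
  rw [mem_eigenspace_iff] at hx hy ⊢
  have h := hR x y
  rw [hx, hy, smul_mul_smul_comm, smul_mul_assoc, mul_smul_comm,
    show -lam • (x * y) + -lam • (x * y) + lam • (x * y) = -lam • (x * y) by module,
    map_smul] at h
  refine smul_right_injective A (neg_ne_zero.mpr hlam) ?_
  dsimp only
  rw [← h, smul_smul]

end IsRotaBaxter

theorem rotaBaxter_splitting_iff_sq_eq_neg_smul_general
    (F : Type*) [Field F] (A : Type*) [NonUnitalNonAssocRing A]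
    [Module F A] [SMulCommClass F A A] [IsScalarTower F A A]
    (lam : F) (hlam : lam ≠ 0)
    (R : A →ₗ[F] A)
    (hRB : ∀ x y : A, R x * R y = R (R x * y + x * R y + lam • (x * y))) :
    (∃ A₁ A₂ : NonUnitalSubalgebra F A,
        IsCompl A₁.toSubmodule A₂.toSubmodule ∧
        (∀ x ∈ A₁, R x = -lam • x) ∧ (∀ x ∈ A₂, R x = 0)) ↔
      ∀ x : A, R (R x) = -lam • R x := by
  constructor
  · rintro ⟨A₁, A₂, hcompl, h₁, h₂⟩
    exact apply_apply_eq_smul_of_codisjoint hcompl.codisjoint h₁ h₂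
  · intro hR
    have hRB : IsRotaBaxter lam R := hRB
    exact ⟨(eigenspace R (-lam)).toNonUnitalSubalgebra fun _ _ => hRB.mul_mem_eigenspace_neg hlam,
      (ker R).toNonUnitalSubalgebra fun _ _ => hRB.mul_mem_ker hlam,
      isCompl_eigenspace_ker_of_apply_apply_eq_smul (neg_ne_zero.mpr hlam) hR,
      fun _ => mem_eigenspace_iff.mp, fun _ => mem_ker.mp⟩

theorem rotaBaxter_splitting_iff_sq_eq_neg_smul
    (F : Type*) [Field F] (A : Type*) [NonUnitalNonAssocRing A]
    [Module F A] [SMulCommClass F A A] [IsScalarTower F A A]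
    [FiniteDimensional F A]
    (lam : F) (hlam : lam ≠ 0)
    (R : A →ₗ[F] A)
    (hRB : ∀ x y : A, R x * R y = R (R x * y + x * R y + lam • (x * y))) :
    (∃ A₁ A₂ : NonUnitalSubalgebra F A,
        IsCompl A₁.toSubmodule A₂.toSubmodule ∧
        (∀ x ∈ A₁, R x = -lam • x) ∧ (∀ x ∈ A₂, R x = 0)) ↔
      ∀ x : A, R (R x) = -lam • R x :=
  rotaBaxter_splitting_iff_sq_eq_neg_smul_general F A lam hlam R hRB
end

section
/- Let 𝕆 be the split octonion algebra over a field F (Zorn vector matrix construction) with e_{ij} the matrix units of M₂(F). The linear map φ : 𝕆 → 𝕆 fixing all e_{ij} and v e_{12}, v e_{22}, and sending v e_{11} ↦ v e_{11} + α v e_{12} and v e_{21} ↦ v e_{21} + α v e_{22} for a fixed α ∈ F, is an algebra automorphism of 𝕆. -/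
open Matrix

noncomputable section

abbrev Oct (F : Type*) [Field F] := Matrix (Fin 2) (Fin 2) F × Matrix (Fin 2) (Fin 2) F

/-- Zorn vector-matrix (split octonion) multiplication:
`(a + v b)(c + v d) = (ac + d b̄) + v(ā d + c b)`, where `x̄ = adjugate x`
is the symplectic involution on 2×2 matrices. -/
def octMul {F : Type*} [Field F] (x y : Oct F) : Oct F :=
  (x.1 * y.1 + y.2 * x.2.adjugate, x.1.adjugate * y.2 + y.1 * x.2)

def octOne {F : Type*} [Field F] : Oct F := (1, 0)

/-- matrix unit `e_{ij}` in the first summand (indices 0,1 for 1,2). -/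
def e {F : Type*} [Field F] (i j : Fin 2) : Oct F := (Matrix.single i j 1, 0)

/-- `v e_{ij}` in the second summand. -/
def ve {F : Type*} [Field F] (i j : Fin 2) : Oct F := (0, Matrix.single i j 1)

set_option maxHeartbeats 1000000 in
set_option synthInstance.maxHeartbeats 400000 in
theorem example1_automorphism (F : Type*) [Field F] (α : F)
    (φ : Oct F →ₗ[F] Oct F)
    (h1 : ∀ i j : Fin 2, φ (e i j) = e i j)
    (h2 : φ (ve 0 1) = ve 0 1)
    (h3 : φ (ve 1 1) = ve 1 1)
    (h4 : φ (ve 0 0) = ve 0 0 + α • ve 0 1)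
    (h5 : φ (ve 1 0) = ve 1 0 + α • ve 1 1) :
    Function.Bijective φ ∧ ∀ x y : Oct F, φ (octMul x y) = octMul (φ x) (φ y) := by
  obtain ⟨M, hM⟩ : ∃ M : Matrix (Fin 2) (Fin 2) F,
      M = 1 + α • Matrix.single 0 1 1 := ⟨_, rfl⟩
  obtain ⟨N, hN⟩ : ∃ N : Matrix (Fin 2) (Fin 2) F,
      N = 1 - α • Matrix.single 0 1 1 := ⟨_, rfl⟩
  have hMN : M * N = 1 := by
    ext i j; fin_cases i <;> fin_cases j <;>
      simp [hM, hN, Matrix.mul_apply, Fin.sum_univ_two, Matrix.single,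
        Matrix.one_apply]
  have hNM : N * M = 1 := by
    ext i j; fin_cases i <;> fin_cases j <;>
      simp [hM, hN, Matrix.mul_apply, Fin.sum_univ_two, Matrix.single,
        Matrix.one_apply]
  have hMadj : M.adjugate = N := by
    ext i j; fin_cases i <;> fin_cases j <;>
      simp [hM, hN, Matrix.adjugate_fin_two, Matrix.single, Matrix.one_apply]
  have hdecomp : ∀ x : Oct F, x =
      x.1 0 0 • e 0 0 + x.1 0 1 • e 0 1 + x.1 1 0 • e 1 0 + x.1 1 1 • e 1 1 +
      x.2 0 0 • ve 0 0 + x.2 0 1 • ve 0 1 + x.2 1 0 • ve 1 0 + x.2 1 1 • ve 1 1 := by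
    intro x
    refine Prod.ext ?_ ?_ <;> ext i j <;> fin_cases i <;> fin_cases j <;>
      simp [e, ve, Prod.fst_add, Prod.snd_add, Prod.smul_fst, Prod.smul_snd,
        Matrix.add_apply, Matrix.smul_apply, Matrix.single, Matrix.of_apply,
        Matrix.zero_apply]
  have key : ∀ x : Oct F, φ x = (x.1, x.2 * M) := by
    intro x
    conv_lhs => rw [hdecomp x]
    simp only [map_add, _root_.map_smul, h1, h2, h3, h4, h5]
    refine Prod.ext ?_ ?_ <;> ext i j <;> fin_cases i <;> fin_cases j <;>
      simp [e, ve, hM, Prod.fst_add, Prod.snd_add, Prod.smul_fst, Prod.smul_snd,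
        Matrix.add_apply, Matrix.smul_apply, Matrix.single, Matrix.of_apply,
        Matrix.zero_apply, Matrix.mul_apply,
        Fin.sum_univ_two, Matrix.one_apply]
  constructor
  · rw [Function.bijective_iff_has_inverse]
    refine ⟨fun x => (x.1, x.2 * N), ?_, ?_⟩
    · intro x
      rw [key x]
      simp [mul_assoc, hMN]
    · intro x
      rw [key]
      simp [mul_assoc, hNM]
  · intro x y
    rw [key, key, key]
    refine Prod.ext ?_ ?_
    · show x.1 * y.1 + y.2 * x.2.adjugate = x.1 * y.1 + y.2 * M * (x.2 * M).adjugate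
      rw [Matrix.adjugate_mul_distrib, hMadj, mul_assoc, ← mul_assoc M, hMN, one_mul]
    · show (x.1.adjugate * y.2 + y.1 * x.2) * M = x.1.adjugate * (y.2 * M) + y.1 * (x.2 * M)
      rw [add_mul, mul_assoc, mul_assoc]
end
end

section
/- Let 𝕆 be the split octonion algebra over a field F. The linear map φ : 𝕆 → 𝕆 defined by φ(e_{11}) = e_{11} + α v e_{22}, φ(e_{12}) = e_{12} + α v e_{12}, φ(e_{21}) = e_{21}, φ(e_{22}) = e_{22} - α v e_{22}, φ(v e_{11}) = v e_{11} - α e_{11} + α e_{22} - α² v e_{22}, φ(v e_{12}) = v e_{12}, φ(v e_{21}) = v e_{21} + α e_{21}, φ(v e_{22}) = v e_{22}, for a fixed α ∈ F, is an algebra automorphism of 𝕆. -/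
open Matrix

noncomputable section

set_option maxHeartbeats 1000000

/-- Explicit coordinate form of the map `φ`. -/
def T {F : Type*} [Field F] (α : F) : Oct F →ₗ[F] Oct F where
  toFun x := (!![x.1 0 0 - α * x.2 0 0, x.1 0 1; x.1 1 0 + α * x.2 1 0, x.1 1 1 + α * x.2 0 0],
    !![x.2 0 0, x.2 0 1 + α * x.1 0 1;
       x.2 1 0, x.2 1 1 + α * x.1 0 0 - α * x.1 1 1 - α^2 * x.2 0 0])
  map_add' x y := by
    refine Prod.ext ?_ ?_ <;> ext i j <;> fin_cases i <;> fin_cases j <;>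
      simp [Matrix.add_apply] <;> ring
  map_smul' c x := by
    refine Prod.ext ?_ ?_ <;> ext i j <;> fin_cases i <;> fin_cases j <;>
      simp [Matrix.smul_apply] <;> ring

lemma oct_decomp {F : Type*} [Field F] (x : Oct F) :
    x = x.1 0 0 • e 0 0 + x.1 0 1 • e 0 1 + x.1 1 0 • e 1 0 + x.1 1 1 • e 1 1 +
      x.2 0 0 • ve 0 0 + x.2 0 1 • ve 0 1 + x.2 1 0 • ve 1 0 + x.2 1 1 • ve 1 1 := by
  refine Prod.ext ?_ ?_ <;> ext i j <;> fin_cases i <;> fin_cases j <;>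
    simp [e, ve, Matrix.single, Matrix.add_apply, Matrix.smul_apply]

theorem example2_automorphism (F : Type*) [Field F] (α : F)
    (φ : Oct F →ₗ[F] Oct F)
    (h1 : φ (e 0 0) = e 0 0 + α • ve 1 1)
    (h2 : φ (e 0 1) = e 0 1 + α • ve 0 1)
    (h3 : φ (e 1 0) = e 1 0)
    (h4 : φ (e 1 1) = e 1 1 - α • ve 1 1)
    (h5 : φ (ve 0 0) = ve 0 0 - α • e 0 0 + α • e 1 1 - (α ^ 2) • ve 1 1)
    (h6 : φ (ve 0 1) = ve 0 1)
    (h7 : φ (ve 1 0) = ve 1 0 + α • e 1 0)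
    (h8 : φ (ve 1 1) = ve 1 1) :
    Function.Bijective φ ∧ ∀ x y : Oct F, φ (octMul x y) = octMul (φ x) (φ y) := by
  have hφ : ∀ x : Oct F, φ x = T α x := by
    intro x
    rw [oct_decomp x]
    simp only [map_add, _root_.map_smul, h1, h2, h3, h4, h5, h6, h7, h8]
    refine Prod.ext ?_ ?_ <;> ext i j <;> fin_cases i <;> fin_cases j <;>
      simp [e, ve, T, Matrix.single, Matrix.add_apply, Matrix.smul_apply,
        Matrix.sub_apply] <;> ring
  constructor
  · refine Function.bijective_iff_has_inverse.mpr ⟨T (-α), ?_, ?_⟩ <;> intro x <;>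
      simp only [hφ] <;>
      refine Prod.ext ?_ ?_ <;> ext i j <;> fin_cases i <;> fin_cases j <;>
      simp [T] <;> ring_nf
  · intro x y
    simp only [hφ]
    refine Prod.ext ?_ ?_ <;> ext i j <;> fin_cases i <;> fin_cases j <;>
      simp [T, octMul, Matrix.adjugate_fin_two, Matrix.mul_apply, Matrix.vecMul,
        dotProduct, Fin.sum_univ_two, Matrix.add_apply] <;> ring
end
end

section
/- Let 𝕆 be the split octonion algebra over a field F and let 0 ≠ α ∈ F. The linear map φ : 𝕆 → 𝕆 fixing all e_{ij} and sending v e_{11} ↦ α v e_{11}, v e_{21} ↦ α v e_{21}, v e_{22} ↦ α⁻¹ v e_{22}, v e_{12} ↦ α⁻¹ v e_{12}, is an algebra automorphism of 𝕆. -/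
set_option maxHeartbeats 1000000


open Matrix

noncomputable section

theorem example7_automorphism (F : Type*) [Field F] (α : F) (hα : α ≠ 0)
    (φ : Oct F →ₗ[F] Oct F)
    (h1 : ∀ i j : Fin 2, φ (e i j) = e i j)
    (h2 : φ (ve 0 0) = α • ve 0 0)
    (h3 : φ (ve 1 0) = α • ve 1 0)
    (h4 : φ (ve 1 1) = α⁻¹ • ve 1 1)
    (h5 : φ (ve 0 1) = α⁻¹ • ve 0 1) :
    Function.Bijective φ ∧ ∀ x y : Oct F, φ (octMul x y) = octMul (φ x) (φ y) := by
  set D : Matrix (Fin 2) (Fin 2) F := !![α, 0; 0, α⁻¹] with hD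
  have hdet : D.det = 1 := by
    rw [hD, Matrix.det_fin_two_of]
    field_simp
    norm_num
  have hDD : D * D.adjugate = 1 := by rw [Matrix.mul_adjugate, hdet, one_smul]
  have hDD' : D.adjugate * D = 1 := by rw [Matrix.adjugate_mul, hdet, one_smul]
  have key : ∀ x : Oct F, φ x = (x.1, x.2 * D) := by
    intro x
    conv_lhs => rw [oct_decomp x]
    simp only [map_add, _root_.map_smul, h1, h2, h3, h4, h5, smul_smul]
    ext i j <;> fin_cases i <;> fin_cases j <;>
      simp [e, ve, hD, Matrix.single, Matrix.add_apply, Matrix.smul_apply,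
        Matrix.mul_apply, Fin.sum_univ_two] <;> ring
  constructor
  · constructor
    · intro x y hxy
      rw [key, key] at hxy
      have h1' := congrArg Prod.fst hxy
      have h2' := congrArg Prod.snd hxy
      simp only at h1' h2'
      have : x.2 = y.2 := by
        have := congrArg (· * D.adjugate) h2'
        simpa [Matrix.mul_assoc, hDD] using this
      exact Prod.ext h1' this
    · intro y
      refine ⟨(y.1, y.2 * D.adjugate), ?_⟩
      rw [key]
      simp [Matrix.mul_assoc, hDD']
  · intro x y
    rw [key, key, key]
    unfold octMul
    simp only
    rw [Prod.mk.injEq]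
    refine ⟨?_, ?_⟩
    · rw [Matrix.adjugate_mul_distrib]
      rw [show y.2 * D * (D.adjugate * x.2.adjugate) = y.2 * (D * D.adjugate) * x.2.adjugate by
        simp [Matrix.mul_assoc], hDD, Matrix.mul_one]
    · rw [Matrix.add_mul, Matrix.mul_assoc, Matrix.mul_assoc]
end
end

section
/- Let 𝕆 be the split octonion algebra over a field F. The linear map R₁ : 𝕆 → 𝕆 defined by R₁(e_{22}) = e_{11}, R₁(e_{21}) = -e_{21}, R₁(v e_{21}) = -v e_{21}, R₁(v e_{22}) = -v e_{22}, and R₁(e_{11}) = R₁(e_{12}) = R₁(v e_{11}) = R₁(v e_{12}) = 0, is a Rota-Baxter operator of weight 1 on 𝕆, and R₁ is not splitting (equivalently, R₁² ≠ -R₁). -/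
open Matrix

noncomputable section

lemma R_formula {F : Type*} [Field F]
    (R : Oct F →ₗ[F] Oct F)
    (h1 : R (e 1 1) = e 0 0)
    (h2 : R (e 1 0) = - e 1 0)
    (h3 : R (ve 1 0) = - ve 1 0)
    (h4 : R (ve 1 1) = - ve 1 1)
    (h5 : R (e 0 0) = 0)
    (h6 : R (e 0 1) = 0)
    (h7 : R (ve 0 0) = 0)
    (h8 : R (ve 0 1) = 0) (x : Oct F) :
    R x = (!![x.1 1 1, 0; -(x.1 1 0), 0], !![0, 0; -(x.2 1 0), -(x.2 1 1)]) := by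
  conv_lhs => rw [oct_decomp x]
  simp only [map_add, LinearMap.map_smul, h1, h2, h3, h4, h5, h6, h7, h8]
  refine Prod.ext ?_ ?_ <;> ext i j <;> fin_cases i <;> fin_cases j <;>
    simp [e, ve, Matrix.single]

set_option maxHeartbeats 2000000 in
theorem R1_nonSplitting_rotaBaxter (F : Type*) [Field F]
    (R : Oct F →ₗ[F] Oct F)
    (h1 : R (e 1 1) = e 0 0)
    (h2 : R (e 1 0) = - e 1 0)
    (h3 : R (ve 1 0) = - ve 1 0)
    (h4 : R (ve 1 1) = - ve 1 1)
    (h5 : R (e 0 0) = 0)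
    (h6 : R (e 0 1) = 0)
    (h7 : R (ve 0 0) = 0)
    (h8 : R (ve 0 1) = 0) :
    (∀ x y : Oct F,
        octMul (R x) (R y) =
          R (octMul (R x) y + octMul x (R y) + octMul x y)) ∧
      ¬ (∀ x : Oct F, R (R x) = - R x) := by
  have key := R_formula R h1 h2 h3 h4 h5 h6 h7 h8
  constructor
  · rintro ⟨a, b⟩ ⟨c, d⟩
    rw [Matrix.eta_fin_two a, Matrix.eta_fin_two b, Matrix.eta_fin_two c, Matrix.eta_fin_two d]
    rw [key, key, key]
    refine Prod.ext ?_ ?_ <;> ext i j <;> fin_cases i <;> fin_cases j <;>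
      simp [octMul, Matrix.adjugate_fin_two_of, Matrix.mul_fin_two] <;> ring
  · intro h
    have := h (e 1 1)
    rw [h1, h5] at this
    have h00 := congrArg (fun z : Oct F => z.1 0 0) this
    simp [e, Matrix.single] at h00
end
end

section
/- Let 𝕆 be the split octonion algebra over a field F. The linear map R₂ : 𝕆 → 𝕆 defined by R₂(e_{21}) = -e_{21}, R₂(e_{22}) = -e_{22}, R₂(v e_{11}) = -v e_{11}, R₂(v e_{21}) = -v e_{21}, R₂(e_{11}) = -1 (the unit of 𝕆), and R₂ vanishing on e_{12}, v e_{12}, v e_{22}, is a Rota-Baxter operator of weight 1 on 𝕆, and R₂ is not splitting. -/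
open Matrix

noncomputable section

set_option maxHeartbeats 1600000 in
theorem R2_nonSplitting_rotaBaxter (F : Type*) [Field F]
    (R : Oct F →ₗ[F] Oct F)
    (h1 : R (e 1 0) = - e 1 0)
    (h2 : R (e 1 1) = - e 1 1)
    (h3 : R (ve 0 0) = - ve 0 0)
    (h4 : R (ve 1 0) = - ve 1 0)
    (h5 : R (e 0 0) = - octOne)
    (h6 : R (e 0 1) = 0)
    (h7 : R (ve 0 1) = 0)
    (h8 : R (ve 1 1) = 0) :
    (∀ x y : Oct F,
        octMul (R x) (R y) =
          R (octMul (R x) y + octMul x (R y) + octMul x y)) ∧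
      ¬ (∀ x : Oct F, R (R x) = - R x) := by
  have hR : ∀ x : Oct F, R x =
      (!![-(x.1 0 0), 0; -(x.1 1 0), -(x.1 0 0) - x.1 1 1],
       !![-(x.2 0 0), 0; -(x.2 1 0), 0]) := by
    intro x
    conv_lhs => rw [oct_decomp x]
    simp only [map_add, _root_.map_smul, h1, h2, h3, h4, h5, h6, h7, h8]
    refine Prod.ext ?_ ?_ <;> ext i j <;> fin_cases i <;> fin_cases j <;>
      simp [e, ve, octOne, Prod.smul_def, Matrix.smul_apply, Matrix.single,
          Matrix.one_apply] <;> try ring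
  constructor
  · intro x y
    rw [hR x, hR y, hR _]
    refine Prod.ext ?_ ?_ <;> ext i j <;> fin_cases i <;> fin_cases j <;>
      · simp [octMul, Matrix.mul_apply, Fin.sum_univ_two, Matrix.adjugate_fin_two,
          Matrix.vecMul, dotProduct, Matrix.vecHead, Matrix.vecTail]
        try ring
  · intro hsplit
    have := hsplit (e 0 0)
    simp only [hR] at this
    have h00 := congrArg (fun z : Oct F => z.1 1 1) this
    simp [e, Matrix.single] at h00
end
end

section
/- In the split octonion algebra 𝕆 over a field F, the subspace A₁ = F e_{11} + F e_{12} + F v e_{11} + F v e_{12} and the subspace A₂ = F e_{21} + F e_{22} + F v e_{21} + F v e_{22} are both subalgebras, neither contains the unit of 𝕆, and 𝕆 = A₁ ⊕ A₂ as a direct sum of vector spaces. -/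
open Matrix

noncomputable section

/-- octonions whose matrices vanish on row `r`. -/
def rowZero (F : Type*) [Field F] (r : Fin 2) : Submodule F (Oct F) where
  carrier := {x | ∀ j, x.1 r j = 0 ∧ x.2 r j = 0}
  zero_mem' := by intro j; simp
  add_mem' := by intro a b ha hb j; simp [(ha j).1, (ha j).2, (hb j).1, (hb j).2]
  smul_mem' := by intro c a ha j; simp [(ha j).1, (ha j).2]

lemma span_eq_rowZero (F : Type*) [Field F] (i : Fin 2) :
    Submodule.span F {e i 0, e i 1, ve i 0, ve i 1} = rowZero F (1 - i) := by
  have hne : (1 : Fin 2) - i ≠ i := by fin_cases i <;> decide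
  apply le_antisymm
  · rw [Submodule.span_le]
    rintro x (rfl | rfl | rfl | rfl) <;>
      { intro j; simp [e, ve, Matrix.single, hne.symm] }
  · intro x hx
    have hrep : x = x.1 i 0 • e i 0 + x.1 i 1 • e i 1 + x.2 i 0 • ve i 0
        + x.2 i 1 • ve i 1 := by
      have h1 := hx 0
      have h2 := hx 1
      refine Prod.ext ?_ ?_ <;> (ext a b) <;>
        fin_cases i <;> fin_cases a <;> fin_cases b <;>
        simp_all [e, ve, Matrix.single]
    rw [hrep]
    have m0 : e i 0 ∈ Submodule.span F ({e i 0, e i 1, ve i 0, ve i 1} : Set (Oct F)) :=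
      Submodule.subset_span (by simp)
    have m1 : e i 1 ∈ Submodule.span F ({e i 0, e i 1, ve i 0, ve i 1} : Set (Oct F)) :=
      Submodule.subset_span (by simp)
    have m2 : ve i 0 ∈ Submodule.span F ({e i 0, e i 1, ve i 0, ve i 1} : Set (Oct F)) :=
      Submodule.subset_span (by simp)
    have m3 : ve i 1 ∈ Submodule.span F ({e i 0, e i 1, ve i 0, ve i 1} : Set (Oct F)) :=
      Submodule.subset_span (by simp)
    exact Submodule.add_mem _ (Submodule.add_mem _ (Submodule.add_mem _
      (Submodule.smul_mem _ _ m0) (Submodule.smul_mem _ _ m1))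
      (Submodule.smul_mem _ _ m2)) (Submodule.smul_mem _ _ m3)

lemma mul_mem_rowZero (F : Type*) [Field F] (r : Fin 2) {x y : Oct F}
    (hx : x ∈ rowZero F r) (hy : y ∈ rowZero F r) : octMul x y ∈ rowZero F r := by
  intro j
  have hx0 := (hx 0).1; have hx0' := (hx 0).2
  have hx1 := (hx 1).1; have hx1' := (hx 1).2
  have hy0 := (hy 0).1; have hy0' := (hy 0).2
  have hy1 := (hy 1).1; have hy1' := (hy 1).2
  constructor <;>
  · simp only [octMul, Matrix.add_apply, Matrix.mul_apply, Fin.sum_univ_two,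
      Matrix.adjugate_fin_two]
    fin_cases r <;> fin_cases j <;>
      simp_all [Matrix.adjugate_fin_two]

theorem nonUnital_four_dim_decomposition (F : Type*) [Field F] :
    let A₁ : Submodule F (Oct F) :=
      Submodule.span F {e 0 0, e 0 1, ve 0 0, ve 0 1}
    let A₂ : Submodule F (Oct F) :=
      Submodule.span F {e 1 0, e 1 1, ve 1 0, ve 1 1}
    (∀ x ∈ A₁, ∀ y ∈ A₁, octMul x y ∈ A₁) ∧
      (∀ x ∈ A₂, ∀ y ∈ A₂, octMul x y ∈ A₂) ∧
      octOne ∉ A₁ ∧ octOne ∉ A₂ ∧ IsCompl A₁ A₂ := by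
  intro A₁ A₂
  have h1 : A₁ = rowZero F 1 := by
    have := span_eq_rowZero F 0; simpa using this
  have h2 : A₂ = rowZero F 0 := by
    have := span_eq_rowZero F 1; simpa using this
  rw [h1, h2]
  refine ⟨fun x hx y hy => mul_mem_rowZero F 1 hx hy,
    fun x hx y hy => mul_mem_rowZero F 0 hx hy, ?_, ?_, ?_, ?_⟩
  · intro h
    have := (h 1).1
    simp [octOne, Matrix.one_apply] at this
  · intro h
    have := (h 0).1
    simp [octOne, Matrix.one_apply] at this
  · rw [disjoint_iff]
    ext x
    simp only [Submodule.mem_inf, Submodule.mem_bot]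
    constructor
    · rintro ⟨ha, hb⟩
      refine Prod.ext ?_ ?_ <;> (ext a b) <;> fin_cases a <;>
        first
        | exact (ha b).1 | exact (ha b).2 | exact (hb b).1 | exact (hb b).2
    · rintro rfl
      exact ⟨(rowZero F 1).zero_mem, (rowZero F 0).zero_mem⟩
  · rw [codisjoint_iff, eq_top_iff]
    intro x _
    have : x = (Matrix.of fun a b => if a = 1 then 0 else x.1 a b,
        Matrix.of fun a b => if a = 1 then 0 else x.2 a b)
        + (Matrix.of fun a b => if a = 0 then 0 else x.1 a b,
        Matrix.of fun a b => if a = 0 then 0 else x.2 a b) := by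
      refine Prod.ext ?_ ?_ <;> (ext a b) <;>
        simp only [Prod.fst_add, Prod.snd_add, Matrix.add_apply, Matrix.of_apply] <;>
        fin_cases a <;> simp
    rw [this]
    exact Submodule.add_mem _
      (Submodule.mem_sup_left (fun j => by simp [rowZero]))
      (Submodule.mem_sup_right (fun j => by simp [rowZero]))
end
end

section
/- In the split octonion algebra 𝕆 over a field F, the subspace A₁ = M₂(F) + F v e_{12} + F v e_{22} (a 6-dimensional subspace) and the subspace A₂ = F v e_{11} + F(v e_{21} + e_{22}) are both subalgebras of 𝕆, and 𝕆 = A₁ ⊕ A₂ as a direct sum of vector spaces. -/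
open Matrix

noncomputable section

section Aux

variable {F : Type*} [Field F]

lemma adj_add (a b : Matrix (Fin 2) (Fin 2) F) :
    (a + b).adjugate = a.adjugate + b.adjugate := by
  simp [Matrix.adjugate_fin_two]; ring_nf; simp

lemma adj_smul (c : F) (a : Matrix (Fin 2) (Fin 2) F) :
    (c • a).adjugate = c • a.adjugate := by
  simp [Matrix.adjugate_fin_two]

lemma octMul_add_left (x x' y : Oct F) :
    octMul (x + x') y = octMul x y + octMul x' y := by
  refine Prod.ext ?_ ?_ <;>
    simp [octMul, adj_add, add_mul, mul_add] <;> abel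

lemma octMul_add_right (x y y' : Oct F) :
    octMul x (y + y') = octMul x y + octMul x y' := by
  refine Prod.ext ?_ ?_ <;>
    simp [octMul, add_mul, mul_add] <;> abel

lemma octMul_smul_left (c : F) (x y : Oct F) :
    octMul (c • x) y = c • octMul x y := by
  refine Prod.ext ?_ ?_ <;>
    simp [octMul, adj_smul, Matrix.smul_mul, Matrix.mul_smul, smul_add]

lemma octMul_smul_right (c : F) (x y : Oct F) :
    octMul x (c • y) = c • octMul x y := by
  refine Prod.ext ?_ ?_ <;>
    simp [octMul, Matrix.smul_mul, Matrix.mul_smul, smul_add]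

/-- `A₁` coincides with this kernel-type submodule. -/
def K1 (F : Type*) [Field F] : Submodule F (Oct F) where
  carrier := {x | x.2 0 0 = 0 ∧ x.2 1 0 = 0}
  add_mem' := by
    rintro a b ⟨ha1, ha2⟩ ⟨hb1, hb2⟩
    simp_all [Matrix.add_apply]
  zero_mem' := by simp
  smul_mem' := by
    rintro c x ⟨h1, h2⟩
    simp_all [Matrix.smul_apply]

lemma span_A1_le_K1 :
    Submodule.span F {e 0 0, e 0 1, e 1 0, e 1 1, ve 0 1, ve 1 1} ≤ K1 F := by
  rw [Submodule.span_le]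
  rintro x (rfl | rfl | rfl | rfl | rfl | rfl) <;>
    constructor <;>
    simp [e, ve, K1, Matrix.single]

lemma mem_span_A1 (x : Oct F) (h1 : x.2 0 0 = 0) (h2 : x.2 1 0 = 0) :
    x ∈ Submodule.span F {e 0 0, e 0 1, e 1 0, e 1 1, ve 0 1, ve 1 1} := by
  have hx : x = x.1 0 0 • e 0 0 + x.1 0 1 • e 0 1 + x.1 1 0 • e 1 0 + x.1 1 1 • e 1 1
      + x.2 0 1 • ve 0 1 + x.2 1 1 • ve 1 1 := by
    refine Prod.ext ?_ ?_ <;> ext i j <;> fin_cases i <;> fin_cases j <;>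
      simp [e, ve, Matrix.single, h1, h2]
  rw [hx]
  have mem : ∀ z ∈ ({e 0 0, e 0 1, e 1 0, e 1 1, ve 0 1, ve 1 1} : Set (Oct F)),
      z ∈ Submodule.span F {e 0 0, e 0 1, e 1 0, e 1 1, ve 0 1, ve 1 1} :=
    fun z hz => Submodule.subset_span hz
  refine Submodule.add_mem _ (Submodule.add_mem _ (Submodule.add_mem _
    (Submodule.add_mem _ (Submodule.add_mem _ ?_ ?_) ?_) ?_) ?_) ?_ <;>
    exact Submodule.smul_mem _ _ (mem _ (by simp))

lemma oct_p11 : octMul (ve 0 0 : Oct F) (ve 0 0) = 0 := by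
  refine Prod.ext ?_ ?_ <;> ext i j <;> fin_cases i <;> fin_cases j <;>
    simp [octMul, e, ve, Matrix.mul_apply, Matrix.adjugate_fin_two, Fin.sum_univ_two,
      Matrix.single, Matrix.vecHead, Matrix.vecTail]

lemma oct_p12 : octMul (ve 0 0 : Oct F) (ve 1 0 + e 1 1) = 0 := by
  refine Prod.ext ?_ ?_ <;> ext i j <;> fin_cases i <;> fin_cases j <;>
    simp [octMul, e, ve, Matrix.mul_apply, Matrix.adjugate_fin_two, Fin.sum_univ_two,
      Matrix.single, Matrix.vecHead, Matrix.vecTail]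

lemma oct_p21 : octMul (ve 1 0 + e 1 1 : Oct F) (ve 0 0) = ve 0 0 := by
  refine Prod.ext ?_ ?_ <;> ext i j <;> fin_cases i <;> fin_cases j <;>
    simp [octMul, e, ve, Matrix.mul_apply, Matrix.adjugate_fin_two, Fin.sum_univ_two,
      Matrix.single, Matrix.vecHead, Matrix.vecTail]

lemma oct_p22 : octMul (ve 1 0 + e 1 1 : Oct F) (ve 1 0 + e 1 1) = ve 1 0 + e 1 1 := by
  refine Prod.ext ?_ ?_ <;> ext i j <;> fin_cases i <;> fin_cases j <;>
    simp [octMul, e, ve, Matrix.mul_apply, Matrix.adjugate_fin_two, Fin.sum_univ_two,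
      Matrix.single, Matrix.vecHead, Matrix.vecTail]

end Aux

theorem six_two_decomposition (F : Type*) [Field F] :
    let A₁ : Submodule F (Oct F) :=
      Submodule.span F {e 0 0, e 0 1, e 1 0, e 1 1, ve 0 1, ve 1 1}
    let A₂ : Submodule F (Oct F) :=
      Submodule.span F {ve 0 0, ve 1 0 + e 1 1}
    (∀ x ∈ A₁, ∀ y ∈ A₁, octMul x y ∈ A₁) ∧
      (∀ x ∈ A₂, ∀ y ∈ A₂, octMul x y ∈ A₂) ∧ IsCompl A₁ A₂ := by
  intro A₁ A₂
  refine ⟨?_, ?_, ?_, ?_⟩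
  · -- A₁ closed under multiplication
    intro x hx y hy
    obtain ⟨hx1, hx2⟩ := span_A1_le_K1 hx
    obtain ⟨hy1, hy2⟩ := span_A1_le_K1 hy
    refine mem_span_A1 _ ?_ ?_ <;>
      simp [octMul, Matrix.mul_apply, Fin.sum_univ_two, hx1, hx2, hy1, hy2]
  · -- A₂ closed under multiplication
    intro x hx y hy
    rw [Submodule.mem_span_pair] at hx hy ⊢
    obtain ⟨s, t, hx⟩ := hx
    obtain ⟨s', t', hy⟩ := hy
    have p11 := oct_p11 (F := F)
    have p12 := oct_p12 (F := F)
    have p21 := oct_p21 (F := F)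
    have p22 := oct_p22 (F := F)
    set g1 : Oct F := ve 0 0 with hg1
    set g2 : Oct F := ve 1 0 + e 1 1 with hg2
    refine ⟨t * s', t * t', ?_⟩
    rw [← hx, ← hy]
    simp only [octMul_add_left, octMul_add_right, octMul_smul_left, octMul_smul_right,
      p11, p12, p21, p22]
    module
  · -- disjoint
    rw [Submodule.disjoint_def]
    intro x hx1 hx2
    obtain ⟨h1, h2⟩ := span_A1_le_K1 hx1
    rw [Submodule.mem_span_pair] at hx2
    obtain ⟨s, t, hx⟩ := hx2
    have hs : s = 0 := by
      have := congrArg (fun z : Oct F => z.2 0 0) hx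
      simpa [e, ve, Matrix.single, h1] using this
    have ht : t = 0 := by
      have := congrArg (fun z : Oct F => z.2 1 0) hx
      simpa [e, ve, Matrix.single, h2] using this
    rw [← hx, hs, ht]
    simp
  · -- codisjoint
    rw [codisjoint_iff, eq_top_iff]
    intro x _
    set q : Oct F := x.2 0 0 • ve 0 0 + x.2 1 0 • (ve 1 0 + e 1 1) with hq
    have hqA2 : q ∈ A₂ := by
      rw [Submodule.mem_span_pair]
      exact ⟨x.2 0 0, x.2 1 0, rfl⟩
    have hpA1 : x - q ∈ A₁ := by
      refine mem_span_A1 _ ?_ ?_ <;>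
        simp [hq, e, ve, Matrix.single]
    have : x = (x - q) + q := by abel
    rw [this]
    exact Submodule.add_mem _ (Submodule.mem_sup_left hpA1) (Submodule.mem_sup_right hqA2)
end
end

section
/- In the split octonion algebra 𝕆 over a field F, the subspace A₁ = F e_{11} + F e_{12} + F e_{22} + F v e_{12} + F v e_{22} and the subspace A₂ = F(e_{21} + e_{11}) + F v e_{11} + F v e_{21} are both subalgebras of 𝕆, and 𝕆 = A₁ ⊕ A₂ as a direct sum of vector spaces. -/
open Matrix

noncomputable section

def B₁ (F : Type*) [Field F] : Submodule F (Oct F) where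
  carrier := {p | p.1 1 0 = 0 ∧ p.2 0 0 = 0 ∧ p.2 1 0 = 0}
  add_mem' := by
    rintro ⟨a, b⟩ ⟨c, d⟩ ⟨h1, h2, h3⟩ ⟨h4, h5, h6⟩
    simp_all [Matrix.add_apply]
  zero_mem' := by simp
  smul_mem' := by
    rintro c ⟨a, b⟩ ⟨h1, h2, h3⟩
    simp_all [Matrix.smul_apply]

def B₂ (F : Type*) [Field F] : Submodule F (Oct F) where
  carrier := {p | p.1 0 1 = 0 ∧ p.1 1 1 = 0 ∧ p.1 0 0 = p.1 1 0 ∧ p.2 0 1 = 0 ∧ p.2 1 1 = 0}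
  add_mem' := by
    rintro ⟨a, b⟩ ⟨c, d⟩ ⟨h1, h2, h3, h4, h5⟩ ⟨h6, h7, h8, h9, h10⟩
    simp_all [Matrix.add_apply]
  zero_mem' := by simp
  smul_mem' := by
    rintro c ⟨a, b⟩ ⟨h1, h2, h3, h4, h5⟩
    simp_all [Matrix.smul_apply]

lemma span_eq_B₁ (F : Type*) [Field F] :
    Submodule.span F {e 0 0, e 0 1, e 1 1, ve 0 1, ve 1 1} = B₁ F := by
  apply le_antisymm
  · rw [Submodule.span_le]
    rintro x hx
    simp only [Set.mem_insert_iff, Set.mem_singleton_iff] at hx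
    rcases hx with rfl | rfl | rfl | rfl | rfl <;>
      simp [B₁, e, ve, Matrix.single_apply_of_ne]
  · rintro ⟨a, b⟩ ⟨h1, h2, h3⟩
    have hx : ((a, b) : Oct F) =
        a 0 0 • e 0 0 + a 0 1 • e 0 1 + a 1 1 • e 1 1 + b 0 1 • ve 0 1 + b 1 1 • ve 1 1 := by
      refine Prod.ext ?_ ?_ <;> ext i j <;> fin_cases i <;> fin_cases j <;>
        simp_all [e, ve, Matrix.single_apply_of_ne, Matrix.single]
    rw [hx]
    have m : ∀ s ∈ ({e 0 0, e 0 1, e 1 1, ve 0 1, ve 1 1} : Set (Oct F)),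
        s ∈ Submodule.span F {e 0 0, e 0 1, e 1 1, ve 0 1, ve 1 1} :=
      fun s hs => Submodule.subset_span hs
    refine Submodule.add_mem _ (Submodule.add_mem _ (Submodule.add_mem _
      (Submodule.add_mem _ ?_ ?_) ?_) ?_) ?_ <;>
      exact Submodule.smul_mem _ _ (Submodule.subset_span (by simp))

lemma span_eq_B₂ (F : Type*) [Field F] :
    Submodule.span F {e 1 0 + e 0 0, ve 0 0, ve 1 0} = B₂ F := by
  apply le_antisymm
  · rw [Submodule.span_le]
    rintro x hx
    simp only [Set.mem_insert_iff, Set.mem_singleton_iff] at hx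
    rcases hx with rfl | rfl | rfl <;>
      simp [B₂, e, ve, Prod.fst_add, Prod.snd_add, Matrix.add_apply,
        Matrix.single_apply_of_ne]
  · rintro ⟨a, b⟩ ⟨h1, h2, h3, h4, h5⟩
    have hx : ((a, b) : Oct F) =
        a 0 0 • (e 1 0 + e 0 0) + b 0 0 • ve 0 0 + b 1 0 • ve 1 0 := by
      refine Prod.ext ?_ ?_ <;> ext i j <;> fin_cases i <;> fin_cases j <;>
        simp_all [e, ve, Prod.fst_add, Prod.snd_add, Prod.smul_fst, Prod.smul_snd,
          Matrix.add_apply, Matrix.smul_apply, Matrix.single_apply_same,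
          Matrix.single_apply_of_ne]
    rw [hx]
    refine Submodule.add_mem _ (Submodule.add_mem _ ?_ ?_) ?_ <;>
      exact Submodule.smul_mem _ _ (Submodule.subset_span (by simp))

theorem five_three_decomposition (F : Type*) [Field F] :
    let A₁ : Submodule F (Oct F) :=
      Submodule.span F {e 0 0, e 0 1, e 1 1, ve 0 1, ve 1 1}
    let A₂ : Submodule F (Oct F) :=
      Submodule.span F {e 1 0 + e 0 0, ve 0 0, ve 1 0}
    (∀ x ∈ A₁, ∀ y ∈ A₁, octMul x y ∈ A₁) ∧
      (∀ x ∈ A₂, ∀ y ∈ A₂, octMul x y ∈ A₂) ∧ IsCompl A₁ A₂ := by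
  intro A₁ A₂
  have hA₁ : A₁ = B₁ F := span_eq_B₁ F
  have hA₂ : A₂ = B₂ F := span_eq_B₂ F
  rw [hA₁, hA₂]
  refine ⟨?_, ?_, ?_, ?_⟩
  · rintro ⟨a, b⟩ ⟨h1, h2, h3⟩ ⟨c, d⟩ ⟨h4, h5, h6⟩
    refine ⟨?_, ?_, ?_⟩ <;>
      simp_all [octMul, Matrix.mul_apply, Fin.sum_univ_two, Matrix.adjugate_fin_two,
        Matrix.add_apply, Matrix.vecMul, dotProduct]
  · rintro ⟨a, b⟩ ⟨h1, h2, h3, h4, h5⟩ ⟨c, d⟩ ⟨h6, h7, h8, h9, h10⟩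
    refine ⟨?_, ?_, ?_, ?_, ?_⟩ <;>
      simp_all [octMul, Matrix.mul_apply, Fin.sum_univ_two, Matrix.adjugate_fin_two,
        Matrix.add_apply, Matrix.vecMul, dotProduct]
  · rw [disjoint_iff_inf_le]
    rintro ⟨a, b⟩ ⟨⟨h1, h2, h3⟩, ⟨h4, h5, h6, h7, h8⟩⟩
    refine Prod.ext ?_ ?_ <;> ext i j <;> fin_cases i <;> fin_cases j <;> simp_all
  · rw [codisjoint_iff, eq_top_iff]
    rintro ⟨a, b⟩ -
    rw [Submodule.mem_sup]
    refine ⟨(a - a 1 0 • !![1, 0; 1, 0], b - !![b 0 0, 0; b 1 0, 0]),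
      ⟨?_, ?_, ?_⟩, (a 1 0 • !![1, 0; 1, 0], !![b 0 0, 0; b 1 0, 0]),
      ⟨?_, ?_, ?_, ?_, ?_⟩, ?_⟩
    case refine_9 =>
      refine Prod.ext ?_ ?_ <;> ext i j <;> fin_cases i <;> fin_cases j <;>
        simp [Prod.fst_add, Prod.snd_add, Matrix.add_apply, Matrix.sub_apply,
          Matrix.smul_apply, Matrix.of_apply]
    all_goals simp [Matrix.sub_apply, Matrix.smul_apply, Matrix.of_apply]
end
end

section
/- In the split octonion algebra 𝕆 over a field F, the subspace A₁ = F·1 + F e_{12} + F v e_{12} + F v e_{22} and the subspace A₂ = F e_{11} + F e_{21} + F v e_{11} + F v e_{21} are both subalgebras of 𝕆 with 1 ∈ A₁, and 𝕆 = A₁ ⊕ A₂ as a direct sum of vector spaces. -/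
open Matrix

noncomputable section

section Aux
variable (F : Type*) [Field F]

def P₁ : Submodule F (Oct F) where
  carrier := {x | x.1 1 0 = 0 ∧ x.1 0 0 = x.1 1 1 ∧ x.2 0 0 = 0 ∧ x.2 1 0 = 0}
  add_mem' := by
    rintro a b ⟨h1, h2, h3, h4⟩ ⟨g1, g2, g3, g4⟩
    simp_all [Matrix.add_apply]
  zero_mem' := by simp
  smul_mem' := by
    rintro c a ⟨h1, h2, h3, h4⟩
    simp_all [Matrix.smul_apply]

def P₂ : Submodule F (Oct F) where
  carrier := {x | x.1 0 1 = 0 ∧ x.1 1 1 = 0 ∧ x.2 0 1 = 0 ∧ x.2 1 1 = 0}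
  add_mem' := by
    rintro a b ⟨h1, h2, h3, h4⟩ ⟨g1, g2, g3, g4⟩
    simp_all [Matrix.add_apply]
  zero_mem' := by simp
  smul_mem' := by
    rintro c a ⟨h1, h2, h3, h4⟩
    simp_all [Matrix.smul_apply]

variable {F}

lemma eq_comb1 (x : Oct F) (h1 : x.1 1 0 = 0) (h2 : x.1 0 0 = x.1 1 1) (h3 : x.2 0 0 = 0)
    (h4 : x.2 1 0 = 0) :
    x = x.1 1 1 • octOne + x.1 0 1 • e 0 1 + x.2 0 1 • ve 0 1 + x.2 1 1 • ve 1 1 := by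
  ext i j <;> fin_cases i <;> fin_cases j <;>
    simp_all [octOne, e, ve, Matrix.single, Matrix.one_apply]

lemma eq_comb2 (x : Oct F) (h1 : x.1 0 1 = 0) (h2 : x.1 1 1 = 0) (h3 : x.2 0 1 = 0)
    (h4 : x.2 1 1 = 0) :
    x = x.1 0 0 • e 0 0 + x.1 1 0 • e 1 0 + x.2 0 0 • ve 0 0 + x.2 1 0 • ve 1 0 := by
  ext i j <;> fin_cases i <;> fin_cases j <;>
    simp_all [e, ve, Matrix.single]

lemma span1_eq : Submodule.span F ({octOne, e 0 1, ve 0 1, ve 1 1} : Set (Oct F)) = P₁ F := by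
  apply le_antisymm
  · rw [Submodule.span_le]
    rintro x (rfl | rfl | rfl | rfl) <;>
      simp [P₁, octOne, e, ve, Matrix.single, Matrix.one_apply]
  · rintro x ⟨h1, h2, h3, h4⟩
    rw [eq_comb1 x h1 h2 h3 h4]
    have m : ∀ y ∈ ({octOne, e 0 1, ve 0 1, ve 1 1} : Set (Oct F)),
        y ∈ Submodule.span F ({octOne, e 0 1, ve 0 1, ve 1 1} : Set (Oct F)) :=
      fun y hy => Submodule.subset_span hy
    refine Submodule.add_mem _ (Submodule.add_mem _ (Submodule.add_mem _ ?_ ?_) ?_) ?_ <;>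
      apply Submodule.smul_mem <;> apply m <;> simp

lemma span2_eq : Submodule.span F ({e 0 0, e 1 0, ve 0 0, ve 1 0} : Set (Oct F)) = P₂ F := by
  apply le_antisymm
  · rw [Submodule.span_le]
    rintro x (rfl | rfl | rfl | rfl) <;>
      simp [P₂, e, ve, Matrix.single]
  · rintro x ⟨h1, h2, h3, h4⟩
    rw [eq_comb2 x h1 h2 h3 h4]
    have m : ∀ y ∈ ({e 0 0, e 1 0, ve 0 0, ve 1 0} : Set (Oct F)),
        y ∈ Submodule.span F ({e 0 0, e 1 0, ve 0 0, ve 1 0} : Set (Oct F)) :=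
      fun y hy => Submodule.subset_span hy
    refine Submodule.add_mem _ (Submodule.add_mem _ (Submodule.add_mem _ ?_ ?_) ?_) ?_ <;>
      apply Submodule.smul_mem <;> apply m <;> simp

lemma mul_mem1 {x y : Oct F} (hx : x ∈ P₁ F) (hy : y ∈ P₁ F) : octMul x y ∈ P₁ F := by
  obtain ⟨h1, h2, h3, h4⟩ := hx
  obtain ⟨g1, g2, g3, g4⟩ := hy
  refine ⟨?_, ?_, ?_, ?_⟩ <;>
    simp_all [octMul, Matrix.add_apply, Matrix.mul_apply, Fin.sum_univ_two,
      Matrix.adjugate_fin_two, Matrix.vecMul, dotProduct] <;> try ring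

lemma mul_mem2 {x y : Oct F} (hx : x ∈ P₂ F) (hy : y ∈ P₂ F) : octMul x y ∈ P₂ F := by
  obtain ⟨h1, h2, h3, h4⟩ := hx
  obtain ⟨g1, g2, g3, g4⟩ := hy
  refine ⟨?_, ?_, ?_, ?_⟩ <;>
    simp_all [octMul, Matrix.add_apply, Matrix.mul_apply, Fin.sum_univ_two,
      Matrix.adjugate_fin_two, Matrix.vecMul, dotProduct] <;> try ring

end Aux

theorem unital_four_four_decomposition (F : Type*) [Field F] :
    let A₁ : Submodule F (Oct F) :=
      Submodule.span F {octOne, e 0 1, ve 0 1, ve 1 1}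
    let A₂ : Submodule F (Oct F) :=
      Submodule.span F {e 0 0, e 1 0, ve 0 0, ve 1 0}
    (∀ x ∈ A₁, ∀ y ∈ A₁, octMul x y ∈ A₁) ∧
      (∀ x ∈ A₂, ∀ y ∈ A₂, octMul x y ∈ A₂) ∧
      octOne ∈ A₁ ∧ IsCompl A₁ A₂ := by
  intro A₁ A₂
  have hA1 : A₁ = P₁ F := span1_eq
  have hA2 : A₂ = P₂ F := span2_eq
  refine ⟨?_, ?_, ?_, ?_⟩
  · rw [hA1]; exact fun x hx y hy => mul_mem1 hx hy
  · rw [hA2]; exact fun x hx y hy => mul_mem2 hx hy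
  · exact Submodule.subset_span (by simp)
  · rw [hA1, hA2]
    constructor
    · rw [disjoint_iff_inf_le]
      rintro x ⟨⟨h1, h2, h3, h4⟩, ⟨g1, g2, g3, g4⟩⟩
      have : x = 0 := by
        ext i j <;> fin_cases i <;> fin_cases j <;> simp_all
      simp [this]
    · rw [codisjoint_iff_le_sup]
      rintro x -
      have hx : x = (x.1 1 1 • octOne + x.1 0 1 • e 0 1 + x.2 0 1 • ve 0 1 + x.2 1 1 • ve 1 1)
          + ((x.1 0 0 - x.1 1 1) • e 0 0 + x.1 1 0 • e 1 0 + x.2 0 0 • ve 0 0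
            + x.2 1 0 • ve 1 0) := by
        ext i j <;> fin_cases i <;> fin_cases j <;>
          simp [octOne, e, ve, Matrix.single, Matrix.one_apply] <;> try ring
      rw [hx]
      refine Submodule.add_mem _ (Submodule.mem_sup_left ?_) (Submodule.mem_sup_right ?_)
      · exact ⟨by simp [octOne, e, ve, Matrix.single, Matrix.one_apply],
          by simp [octOne, e, ve, Matrix.single, Matrix.one_apply],
          by simp [octOne, e, ve, Matrix.single],
          by simp [octOne, e, ve, Matrix.single]⟩
      · exact ⟨by simp [e, ve, Matrix.single],
          by simp [e, ve, Matrix.single],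
          by simp [e, ve, Matrix.single],
          by simp [e, ve, Matrix.single]⟩
end
end

section
/- Let 𝕆 be the split octonion algebra over ℝ. The subalgebra A₁ = ℝ·1 + ℝ(e_{12} - e_{21}) + ℝ v e_{12} + ℝ v e_{22} is not isomorphic as an ℝ-algebra to the subalgebra C₂ = ℝ·1 + ℝ e_{12} + ℝ v e_{12} + ℝ v e_{22}; indeed A₁ contains an element x with x² = -1 while C₂ does not. -/
open Matrix

noncomputable section

lemma octMul_one_left (y : Oct ℝ) : octMul octOne y = y := by
  simp [octMul, octOne]

lemma octMul_one_right (y : Oct ℝ) : octMul y octOne = y := by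
  simp [octMul, octOne]

lemma sq_x : octMul (e 0 1 - e 1 0 : Oct ℝ) (e 0 1 - e 1 0) = - octOne := by
  simp only [octMul, octOne, e, Prod.mk_sub_mk, Prod.mk.injEq, Prod.neg_mk]
  constructor
  · ext i j
    fin_cases i <;> fin_cases j <;>
      simp [Matrix.mul_apply, Fin.sum_univ_two, Matrix.single, Matrix.one_apply]
  · simp

def Cbig : Submodule ℝ (Oct ℝ) where
  carrier := {x | x.1 1 0 = 0 ∧ x.1 1 1 = x.1 0 0 ∧ x.2 0 0 = 0 ∧ x.2 1 0 = 0}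
  add_mem' := by
    rintro a b ⟨h1, h2, h3, h4⟩ ⟨g1, g2, g3, g4⟩
    simp_all [Prod.add_def]
  zero_mem' := by simp
  smul_mem' := by
    rintro c a ⟨h1, h2, h3, h4⟩
    simp_all [Prod.smul_def]

lemma C2_le : Submodule.span ℝ {octOne, e 0 1, ve 0 1, ve 1 1} ≤ Cbig := by
  rw [Submodule.span_le]
  rintro x (rfl | rfl | rfl | rfl) <;>
    simp [Cbig, octOne, e, ve, Matrix.single, Matrix.one_apply]

lemma no_sqrt_neg_one {x : Oct ℝ} (hx : x ∈ Cbig) : octMul x x ≠ - octOne := by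
  intro h
  obtain ⟨h1, h2, h3, h4⟩ := hx
  have hdet : x.2.det = 0 := by rw [Matrix.det_fin_two]; rw [h3, h4]; ring
  have h00 : (octMul x x).1 0 0 = x.1 0 0 * x.1 0 0 := by
    simp only [octMul]
    rw [Matrix.mul_adjugate, hdet]
    simp [Matrix.mul_apply, Fin.sum_univ_two, h1]
  rw [h, Prod.fst_neg] at h00
  have : (-(octOne : Oct ℝ).1) 0 0 = -1 := by simp [octOne, Matrix.one_apply]
  rw [this] at h00
  nlinarith [sq_nonneg (x.1 0 0)]

theorem real_subalgebras_not_isomorphic :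
    let A₁ : Submodule ℝ (Oct ℝ) :=
      Submodule.span ℝ {octOne, e 0 1 - e 1 0, ve 0 1, ve 1 1}
    let C₂ : Submodule ℝ (Oct ℝ) :=
      Submodule.span ℝ {octOne, e 0 1, ve 0 1, ve 1 1}
    (∃ x ∈ A₁, octMul x x = - octOne) ∧
      (¬ ∃ x ∈ C₂, octMul x x = - octOne) ∧
      ¬ ∃ f : A₁ ≃ₗ[ℝ] C₂,
          ∀ (x y : A₁) (h : octMul (x : Oct ℝ) (y : Oct ℝ) ∈ A₁),
            (f ⟨octMul (x : Oct ℝ) (y : Oct ℝ), h⟩ : Oct ℝ) =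
              octMul (f x : Oct ℝ) (f y : Oct ℝ) := by
  intro A₁ C₂
  have h1A : (octOne : Oct ℝ) ∈ A₁ := Submodule.subset_span (by simp)
  have hxA : (e 0 1 - e 1 0 : Oct ℝ) ∈ A₁ := Submodule.subset_span (by simp)
  have h1C : (octOne : Oct ℝ) ∈ C₂ := Submodule.subset_span (by simp)
  refine ⟨⟨e 0 1 - e 1 0, hxA, sq_x⟩, ?_, ?_⟩
  · rintro ⟨x, hx, h⟩
    exact no_sqrt_neg_one (C2_le hx) h
  · rintro ⟨f, hf⟩
    -- the image of the unit is the unit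
    set u : C₂ := f ⟨octOne, h1A⟩ with hu_def
    have hu : ∀ z : C₂, octMul (u : Oct ℝ) (z : Oct ℝ) = z := by
      intro z
      obtain ⟨y, rfl⟩ := f.surjective z
      have hmem : octMul (octOne : Oct ℝ) (y : Oct ℝ) ∈ A₁ := by
        rw [octMul_one_left]; exact y.2
      have := hf ⟨octOne, h1A⟩ y hmem
      have heq : (⟨octMul (octOne : Oct ℝ) (y : Oct ℝ), hmem⟩ : A₁) = y :=
        Subtype.ext (octMul_one_left _)
      rw [heq] at this
      exact this.symm
    have hu1 : (u : Oct ℝ) = octOne := by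
      have := hu ⟨octOne, h1C⟩
      rw [octMul_one_right] at this
      exact this
    -- now transport the square root of -1
    set x₀ : A₁ := ⟨e 0 1 - e 1 0, hxA⟩ with hx0
    have hmem : octMul (x₀ : Oct ℝ) (x₀ : Oct ℝ) ∈ A₁ := by
      rw [hx0, sq_x]; exact neg_mem h1A
    have hkey := hf x₀ x₀ hmem
    have heq : (⟨octMul (x₀ : Oct ℝ) (x₀ : Oct ℝ), hmem⟩ : A₁) = -⟨octOne, h1A⟩ :=
      Subtype.ext (by simp [hx0, sq_x])
    rw [heq, map_neg] at hkey
    have : octMul ((f x₀ : C₂) : Oct ℝ) ((f x₀ : C₂) : Oct ℝ) = - octOne := by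
      rw [← hkey]
      push_cast
      rw [← hu_def, hu1]
    exact no_sqrt_neg_one (C2_le (f x₀).2) this
end
end
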